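/- Let (Ω, F, P) be a probability space, X : Ω → [0,∞) a random variable, and let a ≥ 0 and λ > 0 be constants such that P(X > r) ≤ 2 (1 − Φ((r − a)/λ)) for all r > a, where Φ is the standard normal cumulative distribution function. Then E[e^X] ≤ 2 exp( λ²/2 + a ); in particular e^X is integrable. -/

import Mathlib

open MeasureTheory Set

/-- The standard normal cumulative distribution function
`Φ(x) = (1/√(2π)) ∫_{-∞}^x e^{-y²/2} dy`. -/
noncomputable def stdNormalCDF (x : ℝ) : ℝ :=
  (1 / Real.sqrt (2 * Real.pi)) * ∫ y in Set.Iio x, Real.exp (-y ^ 2 / 2)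

/-!
Since `2 (1 - Φ(c)) = P(|Z| > c)` for a standard Gaussian `Z`, the hypothesis says that `X` is
stochastically dominated by `a + λ|Z|` (for `r ≤ a` trivially, as `P(a + λ|Z| > r) = 1`).
By the layer-cake formula stochastic domination passes to `E[e^X] ≤ E[e^{a + λ|Z|}]`, and
`e^{λ|Z|} ≤ e^{λZ} + e^{-λZ}` bounds the latter by `2 e^a` times the Gaussian moment generating
function `e^{λ²/2}`.
-/

open ProbabilityTheory

theorem integrable_and_integral_le_of_measure_lt_le {α β : Type*} [MeasurableSpace α]
    [MeasurableSpace β] {μ : Measure α} {ν : Measure β} {f : α → ℝ} {g : β → ℝ}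
    (hf_nonneg : 0 ≤ᵐ[μ] f) (hf : AEMeasurable f μ) (hg_nonneg : 0 ≤ᵐ[ν] g)
    (hg : Integrable g ν) (hfg : ∀ t > 0, μ {x | t < f x} ≤ ν {y | t < g y}) :
    Integrable f μ ∧ ∫ x, f x ∂μ ≤ ∫ y, g y ∂ν := by
  have hlint : ∫⁻ x, ENNReal.ofReal (f x) ∂μ ≤ ∫⁻ y, ENNReal.ofReal (g y) ∂ν := by
    rw [lintegral_eq_lintegral_meas_lt μ hf_nonneg hf,
      lintegral_eq_lintegral_meas_lt ν hg_nonneg hg.aemeasurable]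
    exact setLIntegral_mono' measurableSet_Ioi hfg
  have hg_fin := (hasFiniteIntegral_iff_ofReal hg_nonneg).1 hg.hasFiniteIntegral
  refine ⟨⟨hf.aestronglyMeasurable,
    (hasFiniteIntegral_iff_ofReal hf_nonneg).2 (hlint.trans_lt hg_fin)⟩, ?_⟩
  rw [integral_eq_lintegral_of_nonneg_ae hf_nonneg hf.aestronglyMeasurable,
    integral_eq_lintegral_of_nonneg_ae hg_nonneg hg.aestronglyMeasurable]
  exact ENNReal.toReal_mono hg_fin.ne hlint

theorem gaussianReal_real_Iio (x : ℝ) : (gaussianReal 0 1).real (Iio x) = stdNormalCDF x := by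
  rw [measureReal_def, gaussianReal_apply_eq_integral 0 one_ne_zero,
    ENNReal.toReal_ofReal (setIntegral_nonneg measurableSet_Iio
      fun y _ ↦ gaussianPDFReal_nonneg 0 1 y), stdNormalCDF, ← integral_const_mul]
  simp [gaussianPDFReal]

theorem gaussianReal_real_Ioi (x : ℝ) :
    (gaussianReal 0 1).real (Ioi x) = 1 - stdNormalCDF x := by
  have := nullSingletonClass_gaussianReal (μ := 0) one_ne_zero
  rw [← compl_Iic, probReal_compl_eq_one_sub measurableSet_Iic, ← gaussianReal_real_Iio,
    measureReal_congr Iio_ae_eq_Iic]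

theorem gaussianReal_real_lt_abs {c : ℝ} (hc : 0 ≤ c) :
    (gaussianReal 0 1).real {z | c < |z|} = 2 * (1 - stdNormalCDF c) := by
  have hsplit : {z : ℝ | c < |z|} = Ioi c ∪ (fun z ↦ -z) ⁻¹' Ioi c := by
    ext z; exact (lt_abs (a := c) (b := z))
  have hdisj : Disjoint (Ioi c) ((fun z : ℝ ↦ -z) ⁻¹' Ioi c) :=
    disjoint_left.2 fun z h₁ h₂ ↦ by simp only [mem_Ioi, mem_preimage] at h₁ h₂; linarith
  have hneg : (gaussianReal 0 1).real ((fun z ↦ -z) ⁻¹' Ioi c)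
      = (gaussianReal 0 1).real (Ioi c) := by
    rw [← map_measureReal_apply measurable_neg measurableSet_Ioi, gaussianReal_map_neg, neg_zero]
  rw [hsplit, measureReal_union hdisj (measurable_neg measurableSet_Ioi), hneg,
    gaussianReal_real_Ioi]
  ring

theorem measure_lt_le_gaussianReal_of_tail {Ω : Type*} [MeasurableSpace Ω] {P : Measure Ω}
    [IsProbabilityMeasure P] {X : Ω → ℝ} {a l : ℝ} (hl : 0 < l)
    (htail : ∀ r > a, P.real {ω | r < X ω} ≤ 2 * (1 - stdNormalCDF ((r - a) / l))) (r : ℝ) :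
    P {ω | r < X ω} ≤ gaussianReal 0 1 {z | r < a + l * |z|} := by
  rcases lt_or_ge a r with har | hra
  · have hset : {z : ℝ | r < a + l * |z|} = {z | (r - a) / l < |z|} := by
      ext z
      show r < a + l * |z| ↔ (r - a) / l < |z|
      rw [div_lt_iff₀' hl]
      constructor <;> intro h <;> linarith
    rw [← ENNReal.toReal_le_toReal (measure_ne_top _ _) (measure_ne_top _ _), hset]
    exact (htail r har).trans_eq
      (gaussianReal_real_lt_abs (div_nonneg (sub_pos.2 har).le hl.le)).symm
  · have := nullSingletonClass_gaussianReal (μ := 0) one_ne_zero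
    have hsub : ({0}ᶜ : Set ℝ) ⊆ {z | r < a + l * |z|} := fun z hz ↦ by
      have : 0 < |z| := abs_pos.2 hz
      show r < a + l * |z|
      nlinarith
    calc P {ω | r < X ω} ≤ 1 := prob_le_one
      _ = gaussianReal 0 1 {0}ᶜ := by
          rw [prob_compl_eq_one_sub (measurableSet_singleton 0), measure_singleton, tsub_zero]
      _ ≤ _ := measure_mono hsub

theorem Real.exp_mul_abs_le_add (t z : ℝ) :
    Real.exp (t * |z|) ≤ Real.exp (t * z) + Real.exp (-t * z) := by
  rcases abs_choice z with h | h <;> rw [h]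
  · linarith [Real.exp_pos (-t * z)]
  · rw [neg_mul_comm]; linarith [Real.exp_pos (t * z)]

theorem integrable_exp_mul_abs_gaussianReal (v : NNReal) (t : ℝ) :
    Integrable (fun z ↦ Real.exp (t * |z|)) (gaussianReal 0 v) :=
  ((integrable_exp_mul_gaussianReal t).add (integrable_exp_mul_gaussianReal (-t))).mono'
    (by fun_prop) (ae_of_all _ fun z ↦ by
      rw [Real.norm_eq_abs, abs_of_pos (Real.exp_pos _)]; exact Real.exp_mul_abs_le_add t z)

theorem integral_exp_mul_abs_gaussianReal_le (v : NNReal) (t : ℝ) :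
    ∫ z, Real.exp (t * |z|) ∂gaussianReal 0 v ≤ 2 * Real.exp (v * t ^ 2 / 2) := by
  have hmgf (s : ℝ) : ∫ z, Real.exp (s * z) ∂gaussianReal 0 v = Real.exp (v * s ^ 2 / 2) := by
    simpa [mgf] using congrFun (mgf_id_gaussianReal (μ := 0) (v := v)) s
  calc ∫ z, Real.exp (t * |z|) ∂gaussianReal 0 v
      ≤ ∫ z, (Real.exp (t * z) + Real.exp (-t * z)) ∂gaussianReal 0 v :=
        integral_mono (integrable_exp_mul_abs_gaussianReal v t)
          ((integrable_exp_mul_gaussianReal t).add (integrable_exp_mul_gaussianReal (-t)))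
          (Real.exp_mul_abs_le_add t)
    _ = 2 * Real.exp (v * t ^ 2 / 2) := by
        rw [integral_add (integrable_exp_mul_gaussianReal t) (integrable_exp_mul_gaussianReal (-t)),
          hmgf, hmgf, neg_sq]
        ring

theorem stmt_7_general {Ω : Type*} [MeasurableSpace Ω] (P : Measure Ω) [IsProbabilityMeasure P]
    (X : Ω → ℝ) (hXmeas : Measurable X)
    (a l : ℝ) (hl : 0 < l)
    (htail : ∀ r > a, (P {ω | r < X ω}).toReal ≤ 2 * (1 - stdNormalCDF ((r - a) / l))) :
    Integrable (fun ω => Real.exp (X ω)) P ∧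
    ∫ ω, Real.exp (X ω) ∂P ≤ 2 * Real.exp (l ^ 2 / 2 + a) := by
  have hexp_tail : ∀ t > 0, P {ω | t < Real.exp (X ω)}
      ≤ gaussianReal 0 1 {z | t < Real.exp (a + l * |z|)} := by
    intro t ht
    simp only [← Real.log_lt_iff_lt_exp ht]
    exact measure_lt_le_gaussianReal_of_tail hl htail _
  obtain ⟨hint, hle⟩ := integrable_and_integral_le_of_measure_lt_le
    (ae_of_all _ fun ω ↦ (Real.exp_pos (X ω)).le) (Real.measurable_exp.comp hXmeas).aemeasurable
    (ae_of_all _ fun z ↦ (Real.exp_pos (a + l * |z|)).le)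
    (by simpa only [Real.exp_add] using
      (integrable_exp_mul_abs_gaussianReal 1 l).const_mul (Real.exp a)) hexp_tail
  refine ⟨hint, hle.trans ?_⟩
  calc ∫ z, Real.exp (a + l * |z|) ∂gaussianReal 0 1
      = Real.exp a * ∫ z, Real.exp (l * |z|) ∂gaussianReal 0 1 := by
        simp only [Real.exp_add, integral_const_mul]
    _ ≤ Real.exp a * (2 * Real.exp (l ^ 2 / 2)) := by
        simpa only [NNReal.coe_one, one_mul] using
          mul_le_mul_of_nonneg_left (integral_exp_mul_abs_gaussianReal_le 1 l) (Real.exp_pos a).le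
    _ = 2 * Real.exp (l ^ 2 / 2 + a) := by rw [Real.exp_add]; ring

/-- If `X ≥ 0` satisfies the Gaussian-type tail bound
`P(X > r) ≤ 2(1 - Φ((r-a)/λ))` for all `r > a` (with `a ≥ 0`, `λ > 0`), then `e^X` is
integrable and `E[e^X] ≤ 2 exp(λ²/2 + a)`. -/
theorem stmt_7 {Ω : Type*} [MeasurableSpace Ω] (P : Measure Ω) [IsProbabilityMeasure P]
    (X : Ω → ℝ) (hXmeas : Measurable X) (hX0 : ∀ ω, 0 ≤ X ω)
    (a l : ℝ) (ha : 0 ≤ a) (hl : 0 < l)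
    (htail : ∀ r > a, (P {ω | r < X ω}).toReal ≤ 2 * (1 - stdNormalCDF ((r - a) / l))) :
    Integrable (fun ω => Real.exp (X ω)) P ∧
    ∫ ω, Real.exp (X ω) ∂P ≤ 2 * Real.exp (l ^ 2 / 2 + a) :=
  stmt_7_general P X hXmeas a l hl htail
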